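/- Let f be the piecewise affine map of Example 3: on a plane region, f maps triangle ABC affinely onto AEF, triangle ADC affinely onto AFE, and is the identity on the quadrilateral BDFE, where A=(50,100), B=(25,50), C=(50,50), D=(75,50), E=(0,0), F=(100,0) (up to affine coordinates); every point of the union eventually lands in BDFE and is fixed afterwards. Then for every point x with well-defined orbit, the sequence f^n(x) is eventually constant; in particular all Lyapunov exponents lim (1/n) log ‖d_x f^n · v‖ are zero for every x with well-defined orbit and v ≠ 0 such that the limit exists. -/

import Mathlib

/-- Open triangle `ABC` with `A = (50,100)`, `B = (25,50)`, `C = (50,50)`. -/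
def T1ex : Set (ℝ × ℝ) := {p | p.1 < 50 ∧ 50 < p.2 ∧ p.2 < 2 * p.1}

/-- Open triangle `ADC` with `A = (50,100)`, `D = (75,50)`, `C = (50,50)`. -/
def T2ex : Set (ℝ × ℝ) := {p | 50 < p.1 ∧ 50 < p.2 ∧ p.2 < 200 - 2 * p.1}

/-- Open quadrilateral `BDFE` with `B = (25,50)`, `D = (75,50)`, `F = (100,0)`, `E = (0,0)`. -/
def Qex : Set (ℝ × ℝ) := {p | 0 < p.2 ∧ p.2 < 50 ∧ p.2 < 2 * p.1 ∧ p.2 < 200 - 2 * p.1}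

/-- The affine map sending `ABC` onto `AEF` (`A ↦ A`, `B ↦ E`, `C ↦ F`). -/
def g1 (p : ℝ × ℝ) : ℝ × ℝ := (4 * p.1 - p.2 - 50, 2 * p.2 - 100)

/-- The affine map sending `ADC` onto `AFE` (`A ↦ A`, `D ↦ F`, `C ↦ E`). -/
def g2 (p : ℝ × ℝ) : ℝ × ℝ := (4 * p.1 + p.2 - 250, 2 * p.2 - 100)

open Classical in
/-- The piecewise affine map of Example 3. -/
noncomputable def fEx3 (p : ℝ × ℝ) : ℝ × ℝ :=
  if p ∈ T1ex then g1 p else if p ∈ T2ex then g2 p else p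

/-- Linear part of `g1`. -/
noncomputable def M1 : ℝ × ℝ →ₗ[ℝ] ℝ × ℝ :=
  LinearMap.prod ((4 : ℝ) • LinearMap.fst ℝ ℝ ℝ - LinearMap.snd ℝ ℝ ℝ)
    ((2 : ℝ) • LinearMap.snd ℝ ℝ ℝ)

/-- Linear part of `g2`. -/
noncomputable def M2 : ℝ × ℝ →ₗ[ℝ] ℝ × ℝ :=
  LinearMap.prod ((4 : ℝ) • LinearMap.fst ℝ ℝ ℝ + LinearMap.snd ℝ ℝ ℝ)
    ((2 : ℝ) • LinearMap.snd ℝ ℝ ℝ)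

open Classical in
/-- The linear part `d_p f` of `f` at `p`. -/
noncomputable def DfEx3 (p : ℝ × ℝ) : ℝ × ℝ →ₗ[ℝ] ℝ × ℝ :=
  if p ∈ T1ex then M1 else if p ∈ T2ex then M2 else LinearMap.id

/-- The cocycle `d_p f^n`, product of the linear parts along the orbit of `p`. -/
noncomputable def cocycleEx3 (p : ℝ × ℝ) : ℕ → (ℝ × ℝ →ₗ[ℝ] ℝ × ℝ)
  | 0 => LinearMap.id
  | n + 1 => (DfEx3 (fEx3^[n] p)).comp (cocycleEx3 p n)

/-!
On both triangles the second coordinate transforms by `y ↦ 2y - 100`, so the gap `100 - y` to the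
apex doubles at every step while an orbit stays in `ABC ∪ ADC`, where that gap lies in `(0, 50)`.
Hence every orbit leaves the triangles after finitely many steps, and from then on it sits at a
fixed point of `f`, where `d f` is the identity. The cocycle `d_p f^n` is therefore eventually
constant, so `log ‖d_p f^n v‖ / n → 0`.
-/

open Filter Topology Function

theorem Function.iterate_eq_of_isFixedPt_iterate {α : Type*} {f : α → α} {p : α} {N n : ℕ}
    (hfix : IsFixedPt f (f^[N] p)) (hn : N ≤ n) : f^[n] p = f^[N] p := by
  obtain ⟨k, rfl⟩ := Nat.exists_eq_add_of_le hn
  rw [add_comm, iterate_add_apply, iterate_fixed hfix]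

theorem tendsto_log_norm_div_atTop_of_eventuallyEq_const {E : Type*} [Norm E] {u : ℕ → E} {c : E}
    (hu : u =ᶠ[atTop] fun _ => c) :
    Tendsto (fun n : ℕ => Real.log ‖u n‖ / n) atTop (𝓝 0) :=
  (tendsto_const_div_atTop_nhds_zero_nat (Real.log ‖c‖)).congr'
    (hu.mono fun n hn => by simp only [hn])

theorem fEx3_eq_self_of_notMem {p : ℝ × ℝ} (h : p ∉ T1ex ∪ T2ex) : fEx3 p = p := by
  rw [Set.mem_union, not_or] at h
  simp [fEx3, h.1, h.2]

theorem DfEx3_eq_id_of_notMem {p : ℝ × ℝ} (h : p ∉ T1ex ∪ T2ex) : DfEx3 p = LinearMap.id := by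
  rw [Set.mem_union, not_or] at h
  simp [DfEx3, h.1, h.2]

theorem snd_bounds_of_mem {p : ℝ × ℝ} (h : p ∈ T1ex ∪ T2ex) : 50 < p.2 ∧ p.2 < 100 := by
  rcases h with ⟨h1, h2, h3⟩ | ⟨h1, h2, h3⟩ <;> constructor <;> linarith

theorem snd_fEx3_of_mem {p : ℝ × ℝ} (h : p ∈ T1ex ∪ T2ex) : (fEx3 p).2 = 2 * p.2 - 100 := by
  rcases h with h | h
  · simp [fEx3, h, g1]
  · have h1 : p ∉ T1ex := fun h1 => lt_asymm h.1 h1.1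
    simp [fEx3, h1, h, g2]

theorem exists_iterate_fEx3_notMem (p : ℝ × ℝ) : ∃ N, fEx3^[N] p ∉ T1ex ∪ T2ex := by
  by_contra! hmem
  have gap : ∀ n, 100 - (fEx3^[n] p).2 = 2 ^ n * (100 - p.2) := by
    intro n
    induction n with
    | zero => simp
    | succ n ih =>
      rw [iterate_succ_apply', snd_fEx3_of_mem (hmem n), pow_succ]
      linear_combination 2 * ih
  have hp : 0 < 100 - p.2 := by linarith [(snd_bounds_of_mem (p := p) (hmem 0)).2]
  obtain ⟨n, hn⟩ := pow_unbounded_of_one_lt (50 / (100 - p.2)) one_lt_two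
  rw [div_lt_iff₀ hp] at hn
  linarith [gap n, (snd_bounds_of_mem (hmem n)).1]

theorem cocycleEx3_eq_of_le {p : ℝ × ℝ} {N n : ℕ} (hN : fEx3^[N] p ∉ T1ex ∪ T2ex) (hn : N ≤ n) :
    cocycleEx3 p n = cocycleEx3 p N := by
  induction n, hn using Nat.le_induction with
  | base => rfl
  | succ n hn ih =>
    rw [cocycleEx3, iterate_eq_of_isFixedPt_iterate (fEx3_eq_self_of_notMem hN) hn,
      DfEx3_eq_id_of_notMem hN, ih, LinearMap.id_comp]

/-- For the piecewise affine map of Example 3 (identity on the quadrilateral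
`BDFE`), every orbit that is well defined (stays in the continuity domains) is eventually
constant; in particular every Lyapunov exponent `lim (1/n) log ‖d_p f^n v‖` that exists is
zero. -/
theorem fEx3_orbits_eventually_constant :
    ∀ p : ℝ × ℝ, (∀ n : ℕ, fEx3^[n] p ∈ T1ex ∪ T2ex ∪ Qex) →
      (∃ N : ℕ, ∀ n : ℕ, N ≤ n → fEx3^[n] p = fEx3^[N] p) ∧
      (∀ v : ℝ × ℝ, v ≠ 0 → ∀ L : ℝ,
        Filter.Tendsto (fun n : ℕ => Real.log ‖cocycleEx3 p n v‖ / n)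
          Filter.atTop (nhds L) → L = 0) := by
  intro p _
  obtain ⟨N, hN⟩ := exists_iterate_fEx3_notMem p
  refine ⟨⟨N, fun n => iterate_eq_of_isFixedPt_iterate (fEx3_eq_self_of_notMem hN)⟩,
    fun v _ L hL => tendsto_nhds_unique hL ?_⟩
  exact tendsto_log_norm_div_atTop_of_eventuallyEq_const (c := cocycleEx3 p N v)
    (eventually_atTop.2 ⟨N, fun n hn => LinearMap.congr_fun (cocycleEx3_eq_of_le hN hn) v⟩)
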